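/- arXiv:2005.03391 — 4 statements merged into one kernel-verified Lean document; each statement's English description precedes it below -/
import Mathlib

section
/- Let $V$ be a finite set with $|V|=n$ divisible by $3$, and let $X \subseteq V$ with $|X| = 2n/3$. Define the 4-uniform hypergraph $H$ on $V$ whose edges are exactly the 4-element subsets $e \subseteq V$ with $|e \cap X| \neq 2$. Then $H$ contains no tight Hamiltonian cycle, i.e., there is no cyclic ordering of $V$ such that every 4 consecutive vertices form an edge of $H$. -/
/-- Lower bound construction: the 4-uniform hypergraph on `V` (with `|V| = n`, `3 ∣ n`)
whose edges are the 4-element subsets `e` with `|e ∩ X| ≠ 2`, where `|X| = 2n/3`,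
contains no tight Hamiltonian cycle. -/
theorem stmt_0 {V : Type*} [Fintype V] [DecidableEq V] (n : ℕ) [NeZero n]
    (hn : Fintype.card V = n) (h3 : 3 ∣ n)
    (X : Finset V) (hX : 3 * X.card = 2 * n) :
    ¬ ∃ f : ZMod n ≃ V, ∀ i : ZMod n,
        ({f i, f (i + 1), f (i + 2), f (i + 3)} : Finset V).card = 4 ∧
        (({f i, f (i + 1), f (i + 2), f (i + 3)} : Finset V) ∩ X).card ≠ 2 := by
  rintro ⟨f, hf⟩
  classical
  set w : V → ℕ := fun v => if v ∈ X then 1 else 0 with hw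
  have hw1 : ∀ v, w v ≤ 1 := by
    intro v
    by_cases h : v ∈ X <;> simp [hw, h]
  -- if the four elements are distinct, the intersection size is the sum of indicators
  have key : ∀ a b c d : V, ({a, b, c, d} : Finset V).card = 4 →
      (({a, b, c, d} : Finset V) ∩ X).card = w a + w b + w c + w d := by
    intro a b c d h4
    have hd2 : ({c, d} : Finset V).card ≤ 2 := by
      simpa using Finset.card_insert_le c {d}
    have hd3 : ({b, c, d} : Finset V).card ≤ 3 := by
      have := Finset.card_insert_le b ({c, d} : Finset V)
      omega
    have ha : a ∉ ({b, c, d} : Finset V) := by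
      intro ha
      rw [Finset.insert_eq_self.2 ha] at h4
      omega
    have hb : b ∉ ({c, d} : Finset V) := by
      intro hb
      rw [Finset.insert_eq_self.2 hb] at h4
      have := Finset.card_insert_le a ({c, d} : Finset V)
      omega
    have hc : c ≠ d := by
      rintro rfl
      have : ({a, b, c, c} : Finset V) = {a, b, c} := by simp
      rw [this] at h4
      have h1 := Finset.card_insert_le a ({b, c} : Finset V)
      have h2 := Finset.card_insert_le b ({c} : Finset V)
      simp at h2
      omega
    have : ({a, b, c, d} : Finset V) ∩ X = ({a, b, c, d} : Finset V).filter (· ∈ X) := by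
      rw [Finset.filter_mem_eq_inter]
    rw [this, Finset.card_filter, Finset.sum_insert ha, Finset.sum_insert hb,
      Finset.sum_pair hc]
    simp [hw, add_assoc]
  -- the local count
  set s : ZMod n → ℕ := fun i => w (f i) + w (f (i + 1)) + w (f (i + 2)) + w (f (i + 3))
    with hsdef
  have hs : ∀ i, (({f i, f (i + 1), f (i + 2), f (i + 3)} : Finset V) ∩ X).card = s i :=
    fun i => key _ _ _ _ (hf i).1
  have hne2 : ∀ i, s i ≠ 2 := fun i => (hs i) ▸ (hf i).2
  -- consecutive values increase by at most one
  have step : ∀ i : ZMod n, s (i + 1) ≤ s i + 1 := by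
    intro i
    have e2 : i + 1 + 1 = i + 2 := by ring
    have e3 : i + 1 + 2 = i + 3 := by ring
    have h1 := hw1 (f i)
    have h4 := hw1 (f (i + 1 + 3))
    simp only [hsdef, e2, e3]
    omega
  -- propagation: once small, always small
  have prop : ∀ i : ZMod n, s i ≤ 1 → ∀ k : ℕ, s (i + k) ≤ 1 := by
    intro i hi k
    induction k with
    | zero => simpa using hi
    | succ k ih =>
      have hcast : ((k + 1 : ℕ) : ZMod n) = (k : ZMod n) + 1 := by push_cast; ring
      rw [hcast, ← add_assoc]
      have h1 := step (i + k)
      have h2 := hne2 (i + k + 1)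
      omega
  -- total sum
  set T : ℕ := ∑ i : ZMod n, s i with hTdef
  have shift : ∀ j : ZMod n, ∑ i : ZMod n, w (f (i + j)) = ∑ i : ZMod n, w (f i) :=
    fun j => Equiv.sum_comp (Equiv.addRight j) (fun i => w (f i))
  have base : ∑ i : ZMod n, w (f i) = X.card := by
    rw [Equiv.sum_comp f w]
    simp [hw, Finset.sum_boole]
  have hT : T = 4 * X.card := by
    have : T = (∑ i : ZMod n, w (f i)) + (∑ i : ZMod n, w (f (i + 1)))
        + (∑ i : ZMod n, w (f (i + 2))) + (∑ i : ZMod n, w (f (i + 3))) := by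
      rw [hTdef]
      simp only [hsdef]
      rw [← Finset.sum_add_distrib, ← Finset.sum_add_distrib, ← Finset.sum_add_distrib]
    rw [this, shift 1, shift 2, shift 3, base]
    ring
  have hcardZ : Fintype.card (ZMod n) = n := ZMod.card n
  obtain ⟨m, rfl⟩ := h3
  have hm : 1 ≤ m := by
    have := NeZero.ne (3 * m)
    omega
  have hXm : X.card = 2 * m := by omega
  -- there is a small value
  have hsmall : ∃ i, s i ≤ 1 := by
    by_contra h
    push_neg at h
    have h3' : ∀ i, 3 ≤ s i := by
      intro i
      have := h i
      have := hne2 i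
      omega
    have : 3 * (3 * m) ≤ T := by
      calc 3 * (3 * m) = ∑ _i : ZMod (3 * m), 3 := by
            rw [Finset.sum_const, Finset.card_univ, hcardZ, smul_eq_mul]; ring
        _ ≤ T := Finset.sum_le_sum fun i _ => h3' i
    omega
  obtain ⟨i, hi⟩ := hsmall
  have hall : ∀ j, s j ≤ 1 := by
    intro j
    have h := prop i hi ((j - i).val)
    rwa [ZMod.natCast_rightInverse (j - i), add_sub_cancel] at h
  have hTle : T ≤ 3 * m := by
    calc T ≤ ∑ _i : ZMod (3 * m), 1 := Finset.sum_le_sum fun i _ => hall i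
      _ = 3 * m := by rw [Finset.sum_const, Finset.card_univ, hcardZ, smul_eq_mul]; ring
  omega
end

section
/- Let $G = (V, E)$ and $G' = (V, E')$ be two graphs on the same $n$-element vertex set, each with at least $(5/9 + \alpha) n^2 / 2$ edges, where $\alpha > 0$. Let $U \subseteq V$ with $|U| \ge 2n/3$, let $R = G[U]$, and suppose $e_G(U, V \setminus U) \le \alpha n^2 / 4$. Then the number of ordered pairs $(u, v) \in U^2$ such that $uv \in E \cap E'$ and $d_R(v) > n/3$ is at least $\frac{3}{4} \alpha n^2$. -/
/-!
Write `e(X,Y)` for the number of ordered adjacent pairs in `X × Y` (`interedges`). Split `U`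
into the vertices `L` with `d_R(v) > n/3` and the rest `S`, and let `σ = |S|`, `m = |U|`. The
edge-count hypotheses bound `e_G(U,U)` and `e_{G'}(U,U)` from below. The target
`e_{G∩G'}(L,U)` is at least `e_G(U,U) + e_{G'}(U,U) - m² - σn/3` (inclusion–exclusion on
`U × U`, then discard the at most `σn/3` pairs starting in `S`), which suffices when `σ` is
small, and at least `e_G(L,U) + e_{G'}(L,U) - (m - σ)m`, where `e_G(L,U) ≥ e_G(U,U) - σn/3` and
`2 e_{G'}(L,U) ≥ e_{G'}(U,U) - σ²`; this second bound is a concave quadratic in `σ` and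
suffices when `σ` is large.
-/

open Finset

theorem three_div_four_mul_sq_le_of_split_bounds {N m α σ A B P Q g : ℝ} (hα : 0 < α)
    (hm : 2 * N / 3 ≤ m) (hmN : m ≤ N)
    (hA : (5 / 9 + α / 2) * N ^ 2 - (N - m) ^ 2 ≤ A)
    (hB : (5 / 9 + α) * N ^ 2 - (N ^ 2 - m ^ 2) ≤ B)
    (hAL : A ≤ σ * N / 3 + (m - σ) * m)
    (hP : A - σ * N / 3 ≤ P)
    (hQ : B - σ ^ 2 ≤ 2 * Q)
    (hgU : A + B - m ^ 2 - σ * N / 3 ≤ g)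
    (hgL : P + Q - (m - σ) * m ≤ g) :
    3 / 4 * α * N ^ 2 ≤ g := by
  -- `σ N = T` is where the lower bound `hgU` drops to `3/4 α N²`.
  obtain ⟨T, hT⟩ : ∃ T, T = N ^ 2 / 3 - 3 * (N - m) ^ 2 + 9 / 4 * α * N ^ 2 := ⟨_, rfl⟩
  rcases le_or_gt (σ * N) T with hsmall | hlarge
  · linarith
  have hN : 0 < N := by
    by_contra! h
    obtain rfl : N = 0 := by linarith
    obtain rfl : m = 0 := by linarith
    simp [hT] at hlarge
  -- `hgL` bounds `g` below by a concave quadratic in `σ` with vertex `m - N/3`; on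
  -- `[T/N, m - N/3]` it is smallest at `T/N` (`hφ`), where `hpoly` evaluates it.
  have hσN : σ * N ≤ (m - N / 3) * N := by
    have h : σ * (m - N / 3) ≤ (m - N / 3) ^ 2 := by
      nlinarith [mul_nonneg (sub_nonneg.2 hmN) (by linarith : 0 ≤ m - N / 3)]
    have : σ ≤ m - N / 3 := le_of_mul_le_mul_right (by nlinarith) (by linarith : 0 < m - N / 3)
    nlinarith
  have hφ : 0 ≤ (σ * N - T) * (2 * (m - N / 3) * N - σ * N - T) :=
    mul_nonneg (by linarith) (by linarith)
  have hpoly : N ^ 2 * ((N - m) ^ 2 + m ^ 2 / 2 - N ^ 2 / 3 - α * N ^ 2 / 4) ≤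
      (m - N / 3) * N * T - T ^ 2 / 2 := by
    have := mul_nonneg (mul_nonneg (sub_nonneg.2 hmN) (by linarith : 0 ≤ N - 3 * (N - m)))
      (by positivity : 0 ≤ 3 / 2 * (N - m - N / 6) ^ 2 + 5 / 8 * N ^ 2)
    have := mul_nonneg (mul_nonneg hα.le (sq_nonneg N))
      (by positivity : 0 ≤ 27 / 8 * (N - m - N / 6) ^ 2 + 17 / 32 * N ^ 2)
    have := mul_nonneg (mul_nonneg (by positivity : (0:ℝ) ≤ 9 / 8 * α) (sq_nonneg N))
      (by linarith : 0 ≤ (m - N / 3) * N - T)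
    subst hT
    linarith
  have hN2 := sq_nonneg N
  have : N ^ 2 * (3 / 4 * α * N ^ 2) ≤ N ^ 2 * g := by
    linarith [mul_le_mul_of_nonneg_left hgL hN2, mul_le_mul_of_nonneg_left hP hN2,
      mul_le_mul_of_nonneg_left hQ hN2, mul_le_mul_of_nonneg_left hA hN2,
      mul_le_mul_of_nonneg_left hB hN2]
  exact le_of_mul_le_mul_left this (by positivity)

namespace SimpleGraph

variable {V : Type*} (G : SimpleGraph V) [DecidableRel G.Adj]

theorem card_interedges_comm (s t : Finset V) :
    #(G.interedges s t) = #(G.interedges t s) :=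
  have := G.symm
  Rel.card_interedges_comm s t

theorem card_interedges_eq_sum (s t : Finset V) :
    #(G.interedges s t) = ∑ v ∈ s, #{u ∈ t | G.Adj v u} := by
  simp only [interedges_def, card_filter, sum_product]

theorem card_interedges_univ [Fintype V] : #(G.interedges univ univ) = 2 * #G.edgeFinset := by
  simp only [card_interedges_eq_sum, ← sum_degrees_eq_twice_card_edges, degree,
    neighborFinset_eq_filter]

theorem card_interedges_le_of_forall_card_le {R : Type*} [Semiring R] [PartialOrder R]
    [IsOrderedRing R] {s t : Finset V} {d : R} (hd : ∀ v ∈ s, (#{u ∈ t | G.Adj v u} : R) ≤ d) :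
    (#(G.interedges s t) : R) ≤ #s * d := by
  rw [card_interedges_eq_sum, Nat.cast_sum]
  simpa using sum_le_card_nsmul s _ d hd

variable [DecidableEq V]

theorem card_interedges_union_left {s₁ s₂ : Finset V} (h : Disjoint s₁ s₂) (t : Finset V) :
    #(G.interedges (s₁ ∪ s₂) t) = #(G.interedges s₁ t) + #(G.interedges s₂ t) := by
  rw [interedges_def, union_product, filter_union, card_union_of_disjoint]
  · rfl
  · exact G.interedges_disjoint_left h t

theorem card_interedges_union_right (s : Finset V) {t₁ t₂ : Finset V} (h : Disjoint t₁ t₂) :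
    #(G.interedges s (t₁ ∪ t₂)) = #(G.interedges s t₁) + #(G.interedges s t₂) := by
  rw [card_interedges_comm, G.card_interedges_union_left h, card_interedges_comm,
    G.card_interedges_comm t₂]

theorem two_mul_card_edgeFinset_eq [Fintype V] (U : Finset V) :
    2 * #G.edgeFinset =
      #(G.interedges U U) + 2 * #(G.interedges U Uᶜ) + #(G.interedges Uᶜ Uᶜ) := by
  rw [← card_interedges_univ, ← union_compl U, G.card_interedges_union_left disjoint_compl_right,
    G.card_interedges_union_right _ disjoint_compl_right,
    G.card_interedges_union_right _ disjoint_compl_right, G.card_interedges_comm Uᶜ U]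
  ring

theorem card_interedges_add_card_interedges_le (G' : SimpleGraph V) [DecidableRel G'.Adj]
    (s t : Finset V) :
    #(G.interedges s t) + #(G'.interedges s t) ≤ #((G ⊓ G').interedges s t) + #s * #t := by
  have hinter : (G ⊓ G').interedges s t = G.interedges s t ∩ G'.interedges s t := filter_and _ _ _
  have hunion : #(G.interedges s t ∪ G'.interedges s t) ≤ #s * #t :=
    (card_le_card (union_subset (filter_subset _ _) (filter_subset _ _))).trans_eq
      (card_product s t)
  rw [hinter, ← card_union_add_card_inter]
  omega

theorem card_interedges_le_two_mul_add_sq {L S : Finset V} (h : Disjoint L S) :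
    #(G.interedges (L ∪ S) (L ∪ S)) ≤ 2 * #(G.interedges L (L ∪ S)) + #S * #S := by
  have hSL : #(G.interedges S L) ≤ #(G.interedges L (L ∪ S)) :=
    (G.card_interedges_comm S L).trans_le
      (card_le_card (G.interedges_mono subset_rfl subset_union_right))
  rw [G.card_interedges_union_left h, G.card_interedges_union_right S h]
  linarith [G.card_interedges_le_mul S S]

variable {G} in
theorem le_card_interedges_inf_of_split [Fintype V] {n : ℕ} (hn : Fintype.card V = n) {α : ℝ}
    (hα : 0 < α) (G' : SimpleGraph V) [DecidableRel G'.Adj] {U L S : Finset V}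
    (hLS : Disjoint L S) (hU_eq : L ∪ S = U)
    (hS : ∀ v ∈ S, (#{u ∈ U | G.Adj v u} : ℝ) ≤ n / 3)
    (hG : ((5 : ℝ) / 9 + α) * n ^ 2 / 2 ≤ #G.edgeFinset)
    (hG' : ((5 : ℝ) / 9 + α) * n ^ 2 / 2 ≤ #G'.edgeFinset)
    (hU : (2 : ℝ) * n / 3 ≤ #U) (hcut : (#(G.interedges U Uᶜ) : ℝ) ≤ α * n ^ 2 / 4) :
    3 / 4 * α * n ^ 2 ≤ (#((G ⊓ G').interedges L U) : ℝ) := by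
  have hUn : (#U : ℝ) ≤ n := by exact_mod_cast hn ▸ card_le_univ U
  have hcompl : (#Uᶜ : ℝ) = n - #U := by rw [card_compl, hn, Nat.cast_sub (hn ▸ card_le_univ U)]
  have hL : (#L : ℝ) = #U - #S := by
    rw [eq_sub_iff_add_eq, ← Nat.cast_add, ← card_union_of_disjoint hLS, hU_eq]
  have hSU : (#(G.interedges S U) : ℝ) ≤ #S * (n / 3) := G.card_interedges_le_of_forall_card_le hS
  have hIS : #((G ⊓ G').interedges S U) ≤ #(G.interedges S U) :=
    card_le_card fun x hx => by simp only [mem_interedges_iff, inf_adj] at hx ⊢; tauto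
  have hE := G.two_mul_card_edgeFinset_eq U
  have hE' := G'.two_mul_card_edgeFinset_eq U
  have hA_split := G.card_interedges_union_left hLS U
  have hI_split := (G ⊓ G').card_interedges_union_left hLS U
  have hB_le := G'.card_interedges_le_two_mul_add_sq hLS
  rw [hU_eq] at hA_split hI_split hB_le
  have hUUc' := G'.card_interedges_le_mul U Uᶜ
  have hUcUc := G.card_interedges_le_mul Uᶜ Uᶜ
  have hUcUc' := G'.card_interedges_le_mul Uᶜ Uᶜ
  have hLU := G.card_interedges_le_mul L U
  have hIU := card_interedges_add_card_interedges_le G G' U U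
  have hIL := card_interedges_add_card_interedges_le G G' L U
  rify at hE hE' hA_split hI_split hB_le hIS hUUc' hUcUc hUcUc' hLU hIU hIL
  rw [hcompl] at hUUc' hUcUc hUcUc'
  rw [hL] at hLU hIL
  refine three_div_four_mul_sq_le_of_split_bounds (σ := #S) (A := #(G.interedges U U))
    (B := #(G'.interedges U U)) (P := #(G.interedges L U)) (Q := #(G'.interedges L U))
    hα hU hUn ?_ ?_ ?_ ?_ ?_ ?_ ?_ <;> linarith

end SimpleGraph

/-- Lemma 2.2 (lem:L36): if `G, G'` are graphs on the same `n`-set, each with at least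
`(5/9+α)n²/2` edges, `U` has `|U| ≥ 2n/3`, `R = G[U]`, and `e_G(U, V∖U) ≤ αn²/4`, then
the number of ordered pairs `(u,v) ∈ U²` with `uv ∈ E ∩ E'` and `d_R(v) > n/3` is at
least `(3/4)αn²`. -/
theorem stmt_2 {V : Type*} [Fintype V] [DecidableEq V] (n : ℕ)
    (hn : Fintype.card V = n) (α : ℝ) (hα : 0 < α)
    (G G' : SimpleGraph V) [DecidableRel G.Adj] [DecidableRel G'.Adj]
    (hG : ((5 : ℝ)/9 + α) * n^2 / 2 ≤ G.edgeFinset.card)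
    (hG' : ((5 : ℝ)/9 + α) * n^2 / 2 ≤ G'.edgeFinset.card)
    (U : Finset V) (hU : (2 : ℝ) * n / 3 ≤ U.card)
    (hcut : (((univ : Finset (V × V)).filter
        (fun p => p.1 ∈ U ∧ p.2 ∉ U ∧ G.Adj p.1 p.2)).card : ℝ) ≤ α * n^2 / 4) :
    (3 : ℝ)/4 * α * n^2 ≤
      (((U ×ˢ U).filter (fun p => G.Adj p.1 p.2 ∧ G'.Adj p.1 p.2 ∧
          ((n : ℝ)/3 < (U.filter (fun u => G.Adj p.2 u)).card))).card : ℝ) := by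
  set L := {v ∈ U | (n : ℝ) / 3 < #{u ∈ U | G.Adj v u}}
  have hgoal : (U ×ˢ U).filter (fun p => G.Adj p.1 p.2 ∧ G'.Adj p.1 p.2 ∧
      ((n : ℝ) / 3 < (U.filter (fun u => G.Adj p.2 u)).card)) = (G ⊓ G').interedges U L := by
    ext ⟨u, v⟩
    simp only [mem_filter, mem_product, SimpleGraph.mem_interedges_iff, SimpleGraph.inf_adj, L]
    tauto
  have hcut_eq : (univ : Finset (V × V)).filter (fun p => p.1 ∈ U ∧ p.2 ∉ U ∧ G.Adj p.1 p.2)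
      = G.interedges U Uᶜ := by
    ext ⟨u, v⟩
    simp [SimpleGraph.mem_interedges_iff]
  rw [hgoal, SimpleGraph.card_interedges_comm]
  exact SimpleGraph.le_card_interedges_inf_of_split hn hα G' (disjoint_filter_filter_not U U _)
    (filter_union_filter_not_eq _ U) (fun v hv => not_lt.1 (mem_filter.1 hv).2) hG hG' hU
    (hcut_eq ▸ hcut)
end

section
/- Let $G$ be a graph on $n$ vertices with at least $(4/9) n^2 / 2$ edges (i.e., $2e(G) \ge \frac{4}{9} n^2$). Then the number of homomorphic images of the path with 3 edges (ordered 4-tuples $(q_1,q_2,q_3,q_4)$ with $q_1q_2, q_2q_3, q_3q_4 \in E(G)$) is at least $(2e(G))^3 / n^2 \ge \frac{4^3}{9^3} n^4 > n^4 / 12$. -/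
open Finset

lemma holder3 {ι : Type*} (s : Finset ι) (x y z : ι → ℝ)
    (hx : ∀ i ∈ s, 0 ≤ x i) (hy : ∀ i ∈ s, 0 ≤ y i) (hz : ∀ i ∈ s, 0 ≤ z i)
    (h1 : ∀ i ∈ s, 1 ≤ x i * y i * z i) :
    (s.card : ℝ)^3 ≤ (∑ i ∈ s, x i) * (∑ i ∈ s, y i) * (∑ i ∈ s, z i) := by
  rcases s.eq_empty_or_nonempty with rfl | hne
  · simp
  set X := ∑ i ∈ s, x i with hX
  set Y := ∑ i ∈ s, y i with hYdef
  set Z := ∑ i ∈ s, z i with hZdef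
  have hxpos : ∀ i ∈ s, 0 < x i := by
    intro i hi
    rcases (hx i hi).lt_or_eq with h | h
    · exact h
    · exfalso; have := h1 i hi; rw [← h] at this; simp at this; linarith
  have hypos : ∀ i ∈ s, 0 < y i := by
    intro i hi
    rcases (hy i hi).lt_or_eq with h | h
    · exact h
    · exfalso; have := h1 i hi; rw [← h] at this; simp at this; linarith
  have hzpos : ∀ i ∈ s, 0 < z i := by
    intro i hi
    rcases (hz i hi).lt_or_eq with h | h
    · exact h
    · exfalso; have := h1 i hi; rw [← h] at this; simp at this; linarith
  have hXpos : 0 < X := Finset.sum_pos hxpos hne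
  have hYpos : 0 < Y := Finset.sum_pos hypos hne
  have hZpos : 0 < Z := Finset.sum_pos hzpos hne
  have hXYZ : (0:ℝ) ≤ X * Y * Z := by positivity
  have key : (s.card : ℝ) ≤ (X * Y * Z) ^ ((1:ℝ)/3) := by
    have hterm : ∀ i ∈ s, (1:ℝ) ≤ (X*Y*Z)^((1:ℝ)/3) *
        ((x i / X + y i / Y + z i / Z)/3) := by
      intro i hi
      have hxi := hxpos i hi; have hyi := hypos i hi; have hzi := hzpos i hi
      have hgm := Real.geom_mean_le_arith_mean3_weighted
        (by norm_num : (0:ℝ) ≤ 1/3) (by norm_num : (0:ℝ) ≤ 1/3) (by norm_num : (0:ℝ) ≤ 1/3)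
        (le_of_lt (div_pos hxi hXpos)) (le_of_lt (div_pos hyi hYpos))
        (le_of_lt (div_pos hzi hZpos)) (by norm_num)
      have h1' : (1:ℝ) ≤ (x i * y i * z i) ^ ((1:ℝ)/3) := by
        have := Real.rpow_le_rpow (by norm_num : (0:ℝ) ≤ 1) (h1 i hi) (by norm_num : (0:ℝ) ≤ 1/3)
        simpa using this
      have hsplit : (x i * y i * z i) ^ ((1:ℝ)/3)
          = (X*Y*Z)^((1:ℝ)/3) * ((x i/X)^((1:ℝ)/3) * (y i/Y)^((1:ℝ)/3) * (z i/Z)^((1:ℝ)/3)) := by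
        rw [← Real.mul_rpow (by positivity) (by positivity),
            ← Real.mul_rpow (by positivity) (by positivity),
            ← Real.mul_rpow (by positivity) (by positivity)]
        congr 1
        field_simp
      calc (1:ℝ) ≤ (x i * y i * z i) ^ ((1:ℝ)/3) := h1'
        _ = (X*Y*Z)^((1:ℝ)/3) * ((x i/X)^((1:ℝ)/3) * (y i/Y)^((1:ℝ)/3) * (z i/Z)^((1:ℝ)/3)) := hsplit
        _ ≤ (X*Y*Z)^((1:ℝ)/3) * ((x i / X + y i / Y + z i / Z)/3) := by
            apply mul_le_mul_of_nonneg_left _ (Real.rpow_nonneg hXYZ _)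
            calc (x i/X)^((1:ℝ)/3) * (y i/Y)^((1:ℝ)/3) * (z i/Z)^((1:ℝ)/3)
                ≤ 1/3 * (x i/X) + 1/3 * (y i/Y) + 1/3 * (z i/Z) := hgm
              _ = (x i / X + y i / Y + z i / Z)/3 := by ring
    calc (s.card : ℝ) = ∑ _i ∈ s, (1:ℝ) := by simp
      _ ≤ ∑ i ∈ s, (X*Y*Z)^((1:ℝ)/3) * ((x i / X + y i / Y + z i / Z)/3) :=
          Finset.sum_le_sum hterm
      _ = (X*Y*Z)^((1:ℝ)/3) * ((∑ i ∈ s, x i/X + ∑ i ∈ s, y i/Y + ∑ i ∈ s, z i/Z)/3) := by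
          rw [← Finset.mul_sum]
          congr 1
          rw [← Finset.sum_div, Finset.sum_add_distrib, Finset.sum_add_distrib]
      _ = (X*Y*Z)^((1:ℝ)/3) := by
          rw [← Finset.sum_div, ← Finset.sum_div, ← Finset.sum_div, ← hX, ← hYdef, ← hZdef]
          rw [div_self hXpos.ne', div_self hYpos.ne', div_self hZpos.ne']
          norm_num
  calc (s.card : ℝ)^3 ≤ ((X*Y*Z)^((1:ℝ)/3))^3 :=
        pow_le_pow_left₀ (by positivity) key 3
    _ = X*Y*Z := by
        rw [← Real.rpow_natCast ((X*Y*Z)^((1:ℝ)/3)) 3, ← Real.rpow_mul hXYZ]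
        norm_num

lemma ite_mul_split (P Q R : Prop) [Decidable P] [Decidable Q] [Decidable R] :
    (if P ∧ Q ∧ R then (1:ℝ) else 0) =
      (if P then (1:ℝ) else 0) * ((if Q then (1:ℝ) else 0) * (if R then (1:ℝ) else 0)) := by
  by_cases hP : P <;> by_cases hQ : Q <;> by_cases hR : R <;> simp [hP, hQ, hR]

/-- Blakley–Roy for 3-edge walks: if `G` has `n ≥ 1` vertices and `2e(G) ≥ (4/9)n²`,
then the number of ordered 4-tuples `(q₁,q₂,q₃,q₄)` with consecutive entries adjacent
is at least `(2e(G))³/n²`, which is at least `(4³/9³)n⁴`, which exceeds `n⁴/12`. -/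
theorem stmt_4 {V : Type*} [Fintype V] [DecidableEq V] (n : ℕ)
    (hn : Fintype.card V = n) (hn0 : 0 < n)
    (G : SimpleGraph V) [DecidableRel G.Adj]
    (hG : (4 : ℝ)/9 * n^2 ≤ 2 * G.edgeFinset.card) :
    ((2 * G.edgeFinset.card : ℝ)^3 / n^2 ≤
        (((univ : Finset (V × V × V × V)).filter
          (fun q => G.Adj q.1 q.2.1 ∧ G.Adj q.2.1 q.2.2.1 ∧
            G.Adj q.2.2.1 q.2.2.2)).card : ℝ)) ∧
    ((4 : ℝ)^3 / 9^3 * n^4 ≤ (2 * G.edgeFinset.card : ℝ)^3 / n^2) ∧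
    ((n : ℝ)^4 / 12 < (4 : ℝ)^3 / 9^3 * n^4) := by
  classical
  have hnR : (0:ℝ) < n := by exact_mod_cast hn0
  set D : V → ℝ := fun v => (G.degree v : ℝ) with hD
  have hrow : ∀ u : V, ∑ v, (if G.Adj u v then (1:ℝ) else 0) = D u := by
    intro u
    rw [Finset.sum_boole]
    simp [hD, SimpleGraph.neighborFinset_eq_filter, SimpleGraph.degree]
  have hcol : ∀ v : V, ∑ u, (if G.Adj u v then (1:ℝ) else 0) = D v := by
    intro v
    rw [← hrow v]
    simp [G.adj_comm]
  set s : Finset (V × V) := univ.filter (fun p => G.Adj p.1 p.2) with hs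
  have hscard : s.card = 2 * G.edgeFinset.card := by
    rw [hs, ← SimpleGraph.sum_degrees_eq_twice_card_edges, Finset.card_filter,
      Fintype.sum_prod_type]
    refine Finset.sum_congr rfl fun u _ => ?_
    rw [Finset.sum_boole]
    simp [SimpleGraph.neighborFinset_eq_filter, SimpleGraph.degree]
  -- the walk count
  have hT : (((univ : Finset (V × V × V × V)).filter
          (fun q => G.Adj q.1 q.2.1 ∧ G.Adj q.2.1 q.2.2.1 ∧
            G.Adj q.2.2.1 q.2.2.2)).card : ℝ) = ∑ p ∈ s, D p.1 * D p.2 := by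
    rw [Finset.card_filter, Nat.cast_sum]
    simp only [Fintype.sum_prod_type]
    push_cast
    simp only [ite_mul_split]
    simp only [← Finset.mul_sum]
    simp only [hrow]
    rw [Finset.sum_comm]
    simp only [← Finset.sum_mul]
    simp only [hcol]
    rw [hs, Finset.sum_filter, Fintype.sum_prod_type]
    refine Finset.sum_congr rfl fun b _ => ?_
    rw [Finset.mul_sum]
    refine Finset.sum_congr rfl fun c _ => ?_
    by_cases h : G.Adj b c <;> simp [h]
  -- degrees are positive on s
  have hDpos : ∀ p ∈ s, 0 < D p.1 ∧ 0 < D p.2 := by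
    intro p hp
    rw [hs, Finset.mem_filter] at hp
    constructor
    · have : 0 < G.degree p.1 := G.degree_pos_iff_exists_adj p.1 |>.2 ⟨p.2, hp.2⟩
      simp only [hD]; exact_mod_cast this
    · have : 0 < G.degree p.2 := G.degree_pos_iff_exists_adj p.2 |>.2 ⟨p.1, (G.adj_comm _ _).1 hp.2⟩
      simp only [hD]; exact_mod_cast this
  -- the Y-sum bound
  have hdiv_le : ∀ v : V, D v * (1 / D v) ≤ 1 := by
    intro v
    rcases eq_or_ne (D v) 0 with h | h
    · simp [h]
    · rw [mul_one_div, div_self h]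
  have hY : ∑ p ∈ s, 1 / D p.1 ≤ (n:ℝ) := by
    rw [hs, Finset.sum_filter, Fintype.sum_prod_type]
    calc ∑ b, ∑ c, (if G.Adj b c then 1 / D b else 0)
        = ∑ b, D b * (1 / D b) := by
          refine Finset.sum_congr rfl fun b _ => ?_
          rw [← hrow b, Finset.sum_mul]
          refine Finset.sum_congr rfl fun c _ => ?_
          by_cases h : G.Adj b c <;> simp [h]
      _ ≤ ∑ _b : V, (1:ℝ) := Finset.sum_le_sum fun b _ => hdiv_le b
      _ = (n:ℝ) := by simp [hn]
  have hZ : ∑ p ∈ s, 1 / D p.2 ≤ (n:ℝ) := by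
    rw [hs, Finset.sum_filter, Fintype.sum_prod_type, Finset.sum_comm]
    calc ∑ c, ∑ b, (if G.Adj b c then 1 / D c else 0)
        = ∑ c, D c * (1 / D c) := by
          refine Finset.sum_congr rfl fun c _ => ?_
          rw [← hcol c, Finset.sum_mul]
          refine Finset.sum_congr rfl fun b _ => ?_
          by_cases h : G.Adj b c <;> simp [h]
      _ ≤ ∑ _c : V, (1:ℝ) := Finset.sum_le_sum fun c _ => hdiv_le c
      _ = (n:ℝ) := by simp [hn]
  -- Hölder
  have hhold := holder3 s (fun p => D p.1 * D p.2) (fun p => 1 / D p.1) (fun p => 1 / D p.2)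
    (fun p hp => by have := hDpos p hp; positivity)
    (fun p hp => by have := (hDpos p hp).1; positivity)
    (fun p hp => by have := (hDpos p hp).2; positivity)
    (fun p hp => by
      obtain ⟨h1, h2⟩ := hDpos p hp
      rw [show D p.1 * D p.2 * (1 / D p.1) * (1 / D p.2) = (D p.1 / D p.1) * (D p.2 / D p.2) by ring,
        div_self h1.ne', div_self h2.ne', one_mul])
  have hTnonneg : (0:ℝ) ≤ ∑ p ∈ s, D p.1 * D p.2 :=
    Finset.sum_nonneg fun p hp => by have := hDpos p hp; positivity
  have hYnonneg : (0:ℝ) ≤ ∑ p ∈ s, 1 / D p.1 :=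
    Finset.sum_nonneg fun p hp => by have := (hDpos p hp).1; positivity
  have hZnonneg : (0:ℝ) ≤ ∑ p ∈ s, 1 / D p.2 :=
    Finset.sum_nonneg fun p hp => by have := (hDpos p hp).2; positivity
  have hmain : (2 * G.edgeFinset.card : ℝ)^3 ≤ (∑ p ∈ s, D p.1 * D p.2) * n * n := by
    have h2e : (2 * G.edgeFinset.card : ℝ) = (s.card : ℝ) := by
      rw [hscard]; push_cast; ring
    rw [h2e]
    calc (s.card : ℝ)^3 ≤ (∑ p ∈ s, D p.1 * D p.2) * (∑ p ∈ s, 1 / D p.1) * (∑ p ∈ s, 1 / D p.2) := hhold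
      _ ≤ (∑ p ∈ s, D p.1 * D p.2) * n * n := by
          apply mul_le_mul (mul_le_mul le_rfl hY hYnonneg hTnonneg) hZ hZnonneg
          positivity
  refine ⟨?_, ?_, ?_⟩
  · rw [hT, div_le_iff₀ (by positivity)]
    calc (2 * G.edgeFinset.card : ℝ)^3 ≤ (∑ p ∈ s, D p.1 * D p.2) * n * n := hmain
      _ = (∑ p ∈ s, D p.1 * D p.2) * (n:ℝ)^2 := by ring
  · rw [le_div_iff₀ (by positivity)]
    calc (4:ℝ)^3/9^3 * n^4 * n^2 = ((4:ℝ)/9 * n^2)^3 := by ring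
      _ ≤ (2 * G.edgeFinset.card : ℝ)^3 := by
          apply pow_le_pow_left₀ (by positivity) hG
  · have h4 : (0:ℝ) < (n:ℝ)^4 := by positivity
    nlinarith
end

section
/- Let $V$ be a finite nonempty set, $p \in [0,1]$, and let $V_p$ be the random binomial subset of $V$ including each element independently with probability $p$. Let $w : \mathcal{P}(V) \to \mathbb{R}_{\ge 0}$ be a weight function, set $X = \sum_{A \subseteq V} w(A) \mathbf{1}[A \subseteq V_p]$, and set $\Delta = \sum_{A \cap B \neq \emptyset} w(A) w(B) \, \mathbb{P}(A \cup B \subseteq V_p)$, the sum over ordered pairs $(A,B)$ of subsets with $A \cap B \neq \emptyset$. Then for every $t \in [0, \mathbb{E}X]$, $\mathbb{P}(X \le \mathbb{E}X - t) \le \exp(-t^2 / (2\Delta))$. -/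
/-!
Let `ψ(s) = 𝔼 e^{-sX}`. Fix `A` and split `X = Y + Z`, where `Z` only counts the sets disjoint
from `A`. Then `e^{-sZ}` does not depend on `V_p ∩ A`, so it is independent of the event
`A ⊆ V_p`; and it is decreasing, so by Harris's inequality (FKG) it is negatively correlated
with every increasing event `A ∪ B ⊆ V_p`. Together with `e^{-sY} ≥ 1 - sY` this gives
`𝔼[𝟙[A ⊆ V_p] e^{-sX}] ≥ ψ(s) (p^|A| - s Δ_A)`, and summing over `A` with weights `w A`,
`-ψ'(s) ≥ (𝔼X - sΔ) ψ(s)`. Hence `ψ(s) e^{s𝔼X - s²Δ/2}` is decreasing on `s ≥ 0`, so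
`ψ(λ) ≤ e^{λ²Δ/2 - λ𝔼X}`, and Markov's inequality for `e^{-λX}` with `λ = t/Δ` concludes.
-/

open Finset

namespace RandomSubset

variable {V : Type*} {p : ℝ}

noncomputable def weight (p : ℝ) (G U : Finset V) : ℝ := p ^ #U * (1 - p) ^ (#G - #U)

noncomputable def expectation (p : ℝ) (G : Finset V) (f : Finset V → ℝ) : ℝ :=
  ∑ U ∈ G.powerset, weight p G U * f U

lemma weight_nonneg (hp0 : 0 ≤ p) (hp1 : p ≤ 1) (G U : Finset V) : 0 ≤ weight p G U :=
  mul_nonneg (pow_nonneg hp0 _) (pow_nonneg (sub_nonneg.2 hp1) _)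

lemma expectation_const (p : ℝ) (G : Finset V) (c : ℝ) : expectation p G (fun _ ↦ c) = c := by
  simp only [expectation, ← sum_mul, weight, sum_pow_mul_eq_add_pow, add_sub_cancel, one_pow,
    one_mul]

lemma expectation_mono (hp0 : 0 ≤ p) (hp1 : p ≤ 1) {G : Finset V} {f g : Finset V → ℝ}
    (h : ∀ U, f U ≤ g U) : expectation p G f ≤ expectation p G g :=
  sum_le_sum fun U _ ↦ mul_le_mul_of_nonneg_left (h U) (weight_nonneg hp0 hp1 G U)

lemma expectation_nonneg (hp0 : 0 ≤ p) (hp1 : p ≤ 1) {G : Finset V} {f : Finset V → ℝ}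
    (h : ∀ U, 0 ≤ f U) : 0 ≤ expectation p G f := by
  simpa [expectation_const] using expectation_mono hp0 hp1 (G := G) h

lemma expectation_sub (p : ℝ) (G : Finset V) (f g : Finset V → ℝ) :
    expectation p G (fun U ↦ f U - g U) = expectation p G f - expectation p G g := by
  simp only [expectation, mul_sub, sum_sub_distrib]

lemma expectation_const_mul (p : ℝ) (G : Finset V) (c : ℝ) (f : Finset V → ℝ) :
    expectation p G (fun U ↦ c * f U) = c * expectation p G f := by
  simp only [expectation, mul_sum, mul_left_comm]

lemma expectation_sum {ι : Type*} (p : ℝ) (G : Finset V) (I : Finset ι)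
    (f : ι → Finset V → ℝ) :
    expectation p G (fun U ↦ ∑ i ∈ I, f i U) = ∑ i ∈ I, expectation p G (f i) := by
  simp only [expectation, mul_sum]
  exact sum_comm

lemma expectation_insert [DecidableEq V] {a : V} {G : Finset V} (ha : a ∉ G) (f : Finset V → ℝ) :
    expectation p (insert a G) f =
      (1 - p) * expectation p G f + p * expectation p G (fun U ↦ f (insert a U)) := by
  simp only [expectation, sum_powerset_insert ha, mul_sum]
  congr 1 <;> refine sum_congr rfl fun U hU ↦ ?_
  all_goals
    have hUG : #U ≤ #G := card_le_card (mem_powerset.1 hU)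
    have haU : a ∉ U := fun h ↦ ha (mem_powerset.1 hU h)
    simp only [weight, card_insert_of_notMem ha, card_insert_of_notMem haU]
  · rw [show #G + 1 - #U = #G - #U + 1 by omega, pow_succ]; ring
  · rw [Nat.add_sub_add_right, pow_succ]; ring

lemma expectation_congr {G : Finset V} {f g : Finset V → ℝ} (h : ∀ U ⊆ G, f U = g U) :
    expectation p G f = expectation p G g :=
  sum_congr rfl fun U hU ↦ by rw [h U (mem_powerset.1 hU)]

lemma sdiff_invariant_of_subset [DecidableEq V] {S T : Finset V} (hST : S ⊆ T)
    {f : Finset V → ℝ} (hf : ∀ U, f (U \ T) = f U) (U : Finset V) : f (U \ S) = f U := by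
  rw [← hf (U \ S), sdiff_sdiff_left, sup_eq_right.2 hST, hf]

lemma expectation_ite_mem [DecidableEq V] {a : V} {G : Finset V} (ha : a ∈ G)
    {f : Finset V → ℝ} (hf : ∀ U, f (U \ {a}) = f U) :
    expectation p G (fun U ↦ if a ∈ U then f U else 0) = p * expectation p G f := by
  have hG : a ∉ G.erase a := notMem_erase a _
  have hinsert : ∀ U, f (insert a U) = f U := fun U ↦ by
    rw [← hf, insert_sdiff_of_mem _ (mem_singleton_self a), hf]
  rw [← insert_erase ha, expectation_insert hG, expectation_insert hG,
    expectation_congr (fun U hU ↦ if_neg fun h ↦ hG (hU h)),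
    expectation_congr (fun U _ ↦ (if_pos (mem_insert_self a U)).trans (hinsert U)),
    expectation_congr fun U _ ↦ hinsert U, expectation_const]
  ring

lemma expectation_ite_subset [DecidableEq V] {S G : Finset V} (hS : S ⊆ G)
    {f : Finset V → ℝ} (hf : ∀ U, f (U \ S) = f U) :
    expectation p G (fun U ↦ if S ⊆ U then f U else 0) = p ^ #S * expectation p G f := by
  induction S using Finset.induction_on generalizing f with
  | empty => simp
  | @insert a S ha ih =>
    have hfa : ∀ U, f (U \ {a}) = f U := sdiff_invariant_of_subset (by simp) hf
    have hfS : ∀ U, f (U \ S) = f U := sdiff_invariant_of_subset (subset_insert a S) hf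
    set g : Finset V → ℝ := fun U ↦ if a ∈ U then f U else 0
    have hgS : ∀ U, g (U \ S) = g U := fun U ↦ by
      simp only [g, mem_sdiff, ha, hfS, not_false_eq_true, and_true]
    have hsplit :
        (fun U ↦ if insert a S ⊆ U then f U else 0) = fun U ↦ if S ⊆ U then g U else 0 := by
      ext U
      by_cases haU : a ∈ U <;> by_cases hSU : S ⊆ U <;> simp [g, insert_subset_iff, haU, hSU]
    rw [hsplit, card_insert_of_notMem ha, ih ((insert_subset_iff.1 hS).2) hgS,
      expectation_ite_mem (hS (mem_insert_self a S)) hfa, pow_succ, mul_assoc]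

lemma expectation_indicator [DecidableEq V] {S G : Finset V} (hS : S ⊆ G) (c : ℝ) :
    expectation p G (fun U ↦ if S ⊆ U then c else 0) = p ^ #S * c := by
  rw [expectation_ite_subset hS (f := fun _ ↦ c) fun _ ↦ rfl, expectation_const]

lemma weight_mul_weight [DecidableEq V] {G a b : Finset V} (ha : a ⊆ G) (hb : b ⊆ G) :
    weight p G a * weight p G b = weight p G (a ∩ b) * weight p G (a ∪ b) := by
  have hcard := card_union_add_card_inter a b
  have ha' := card_le_card ha
  have hb' := card_le_card hb
  have hab := card_le_card (union_subset ha hb)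
  have hi := card_le_card (inter_subset_left : a ∩ b ⊆ a)
  have e₁ : #a + #b = #(a ∩ b) + #(a ∪ b) := by omega
  have e₂ : (#G - #a) + (#G - #b) = (#G - #(a ∩ b)) + (#G - #(a ∪ b)) := by omega
  calc weight p G a * weight p G b = p ^ (#a + #b) * (1 - p) ^ ((#G - #a) + (#G - #b)) := by
        simp only [weight]; ring
    _ = _ := by rw [e₁, e₂, weight, weight]; ring

lemma expectation_univ [Fintype V] (p : ℝ) (f : Finset V → ℝ) :
    expectation p univ f = ∑ U, weight p univ U * f U := by
  rw [expectation, powerset_univ]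

lemma expectation_ite_subset_le [Fintype V] [DecidableEq V] (hp0 : 0 ≤ p) (hp1 : p ≤ 1)
    (S : Finset V) {g : Finset V → ℝ} (hg : Antitone g) :
    expectation p univ (fun U ↦ if S ⊆ U then g U else 0) ≤ p ^ #S * expectation p univ g := by
  have hfkg := fkg (μ := weight p univ) (f := fun U ↦ if S ⊆ U then 1 else 0)
    (g := fun U ↦ g ∅ - g U) (fun U ↦ weight_nonneg hp0 hp1 _ U)
    (fun U ↦ by by_cases h : S ⊆ U <;> simp [h])
    (fun U ↦ sub_nonneg.2 (hg (empty_subset U)))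
    (fun U U' hUU' ↦ by
      dsimp only
      split_ifs with h h' <;> first | rfl | exact zero_le_one | exact absurd (h.trans hUU') h')
    (fun U U' hUU' ↦ sub_le_sub_left (hg hUU') _)
    (fun a b ↦ (weight_mul_weight (subset_univ a) (subset_univ b)).le)
  have hprod : (fun U ↦ (if S ⊆ U then 1 else 0) * (g ∅ - g U)) =
      fun U ↦ (if S ⊆ U then g ∅ else 0) - if S ⊆ U then g U else 0 := by
    ext U; split_ifs <;> ring
  simp only [← expectation_univ, hprod, expectation_sub, expectation_indicator (subset_univ S),
    expectation_const] at hfkg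
  rw [show ∑ U, weight p univ U = 1 by simpa [expectation_univ] using expectation_const p univ 1]
    at hfkg
  linarith

lemma sum_weight_le_le_exp_mul_expectation (hp0 : 0 ≤ p) (hp1 : p ≤ 1) {G : Finset V}
    (f : Finset V → ℝ) (a : ℝ) {l : ℝ} (hl : 0 ≤ l) :
    ∑ U ∈ G.powerset with f U ≤ a, weight p G U ≤
      Real.exp (l * a) * expectation p G (fun U ↦ Real.exp (-(l * f U))) := by
  rw [← expectation_const_mul, sum_filter, expectation]
  refine sum_le_sum fun U _ ↦ ?_
  split_ifs with h
  · refine le_mul_of_one_le_right (weight_nonneg hp0 hp1 G U) ?_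
    rw [← Real.exp_add]
    exact Real.one_le_exp (by nlinarith)
  · exact mul_nonneg (weight_nonneg hp0 hp1 G U) (by positivity)

end RandomSubset

namespace Janson

open RandomSubset Real

variable {V : Type*} [DecidableEq V]

def weightedCount (w : Finset V → ℝ) (𝓑 : Finset (Finset V)) (T : Finset V) : ℝ :=
  ∑ B ∈ 𝓑, if B ⊆ T then w B else 0

section

variable {w : Finset V → ℝ}

lemma weightedCount_nonneg (hw : ∀ A, 0 ≤ w A) (𝓑 : Finset (Finset V)) (T : Finset V) :
    0 ≤ weightedCount w 𝓑 T :=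
  sum_nonneg fun B _ ↦ by split_ifs <;> simp [hw]

lemma weightedCount_mono (hw : ∀ A, 0 ≤ w A) (𝓑 : Finset (Finset V)) :
    Monotone (weightedCount w 𝓑) := fun T T' hT ↦
  sum_le_sum fun B _ ↦ by
    by_cases h : B ⊆ T
    · simp [h, h.trans hT]
    · simp only [h, if_false]; split_ifs <;> simp [hw]

lemma weightedCount_filter_add_filter_not (w : Finset V → ℝ) (𝓑 : Finset (Finset V))
    (P : Finset V → Prop) [DecidablePred P] (T : Finset V) :
    weightedCount w (𝓑.filter P) T + weightedCount w (𝓑.filter fun B ↦ ¬P B) T =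
      weightedCount w 𝓑 T :=
  sum_filter_add_sum_filter_not _ _ _

lemma weightedCount_sdiff {𝓑 : Finset (Finset V)} {S : Finset V}
    (h : ∀ B ∈ 𝓑, Disjoint B S) (T : Finset V) :
    weightedCount w 𝓑 (T \ S) = weightedCount w 𝓑 T :=
  sum_congr rfl fun B hB ↦ by simp only [subset_sdiff, h B hB, and_true]

lemma expectation_weightedCount (p : ℝ) {G : Finset V} {𝓑 : Finset (Finset V)}
    (h𝓑 : ∀ B ∈ 𝓑, B ⊆ G) :
    expectation p G (weightedCount w 𝓑) = ∑ B ∈ 𝓑, p ^ #B * w B := by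
  change expectation p G (fun T ↦ ∑ B ∈ 𝓑, _) = _
  rw [expectation_sum]
  exact sum_congr rfl fun B hB ↦ expectation_indicator (h𝓑 B hB) (w B)

lemma expectation_ite_subset_mul_weightedCount_le [Fintype V] {p : ℝ} (hp0 : 0 ≤ p)
    (hp1 : p ≤ 1) (hw : ∀ A, 0 ≤ w A) (A : Finset V) (𝓑 : Finset (Finset V))
    {g : Finset V → ℝ} (hg : Antitone g) :
    (expectation p univ fun T ↦ if A ⊆ T then weightedCount w 𝓑 T * g T else 0) ≤
      (∑ B ∈ 𝓑, w B * p ^ #(A ∪ B)) * expectation p univ g := by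
  have hsplit : (fun T ↦ if A ⊆ T then weightedCount w 𝓑 T * g T else 0) =
      fun T ↦ ∑ B ∈ 𝓑, w B * if A ∪ B ⊆ T then g T else 0 := by
    ext T
    by_cases hA : A ⊆ T
    · simp [hA, weightedCount, sum_mul, union_subset_iff, mul_ite]
    · simp [hA, union_subset_iff]
  rw [hsplit, expectation_sum, sum_mul]
  refine sum_le_sum fun B _ ↦ ?_
  rw [expectation_const_mul, mul_assoc]
  exact mul_le_mul_of_nonneg_left (expectation_ite_subset_le hp0 hp1 _ hg) (hw B)

end

section

variable [Fintype V] (p : ℝ) (w : Finset V → ℝ)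

noncomputable def negMgf (s : ℝ) : ℝ :=
  expectation p univ fun T ↦ exp (-(s * weightedCount w univ.powerset T))

noncomputable def overlapSum (A : Finset V) : ℝ :=
  ∑ B ∈ univ.powerset with (A ∩ B).Nonempty, w B * p ^ #(A ∪ B)

noncomputable def delta : ℝ := ∑ A ∈ univ.powerset, w A * overlapSum p w A

variable {p w}

lemma delta_nonneg (hp0 : 0 ≤ p) (hw : ∀ A, 0 ≤ w A) : 0 ≤ delta p w :=
  sum_nonneg fun A _ ↦ mul_nonneg (hw A) <| sum_nonneg fun B _ ↦ mul_nonneg (hw B) (pow_nonneg hp0 _)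

lemma negMgf_mul_le_expectation_ite_subset (hp0 : 0 ≤ p) (hp1 : p ≤ 1) (hw : ∀ A, 0 ≤ w A)
    {s : ℝ} (hs : 0 ≤ s) (A : Finset V) :
    negMgf p w s * (p ^ #A - s * overlapSum p w A) ≤
      expectation p univ fun T ↦
        if A ⊆ T then exp (-(s * weightedCount w univ.powerset T)) else 0 := by
  set X := weightedCount w univ.powerset
  set 𝓜 := univ.powerset.filter fun B ↦ (A ∩ B).Nonempty
  set Y := weightedCount w 𝓜
  set Z := weightedCount w (univ.powerset.filter fun B ↦ ¬(A ∩ B).Nonempty)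
  set g : Finset V → ℝ := fun T ↦ exp (-(s * Z T))
  have hXYZ : ∀ T, X T = Y T + Z T := fun T ↦
    (weightedCount_filter_add_filter_not w _ _ T).symm
  have hgA : ∀ T, g (T \ A) = g T := fun T ↦ by
    simp only [g, Z]
    rw [weightedCount_sdiff fun B hB ↦ disjoint_comm.1 <|
      disjoint_iff_inter_eq_empty.2 <| not_nonempty_iff_eq_empty.1 (mem_filter.1 hB).2]
  have hg : Antitone g := fun T T' h ↦
    exp_le_exp.2 <| neg_le_neg <| mul_le_mul_of_nonneg_left (weightedCount_mono hw _ h) hs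
  have hψ : negMgf p w s ≤ expectation p univ g := expectation_mono hp0 hp1 fun T ↦
    exp_le_exp.2 (by nlinarith [hXYZ T, weightedCount_nonneg hw 𝓜 T])
  have hpoint : ∀ T, ((if A ⊆ T then g T else 0) - s * if A ⊆ T then Y T * g T else 0) ≤
      if A ⊆ T then exp (-(s * X T)) else 0 := fun T ↦ by
    split_ifs
    · rw [hXYZ, mul_add, neg_add, exp_add]
      nlinarith [add_one_le_exp (-(s * Y T)), exp_pos (-(s * Z T))]
    · simp
  have hlower : expectation p univ g * (p ^ #A - s * overlapSum p w A) ≤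
      expectation p univ fun T ↦ if A ⊆ T then exp (-(s * X T)) else 0 := by
    calc expectation p univ g * (p ^ #A - s * overlapSum p w A)
        = (expectation p univ fun T ↦ if A ⊆ T then g T else 0) -
            s * (overlapSum p w A * expectation p univ g) := by
          rw [expectation_ite_subset (subset_univ A) hgA]; ring
      _ ≤ (expectation p univ fun T ↦ if A ⊆ T then g T else 0) -
            s * expectation p univ fun T ↦ if A ⊆ T then Y T * g T else 0 := by
          gcongr
          exact expectation_ite_subset_mul_weightedCount_le hp0 hp1 hw A 𝓜 hg
      _ ≤ _ := by
          rw [← expectation_const_mul, ← expectation_sub]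
          exact expectation_mono hp0 hp1 hpoint
  rcases le_or_gt 0 (p ^ #A - s * overlapSum p w A) with hc | hc
  · exact (mul_le_mul_of_nonneg_right hψ hc).trans hlower
  · refine (mul_nonpos_of_nonneg_of_nonpos ?_ hc.le).trans (expectation_nonneg hp0 hp1 ?_)
    · exact expectation_nonneg hp0 hp1 fun T ↦ (exp_pos _).le
    · intro T; split_ifs <;> simp [(exp_pos _).le]

lemma mean_sub_mul_delta_mul_negMgf_le (hp0 : 0 ≤ p) (hp1 : p ≤ 1) (hw : ∀ A, 0 ≤ w A)
    {s : ℝ} (hs : 0 ≤ s) :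
    (expectation p univ (weightedCount w univ.powerset) - s * delta p w) * negMgf p w s ≤
      expectation p univ fun T ↦
        weightedCount w univ.powerset T * exp (-(s * weightedCount w univ.powerset T)) := by
  have hsplit : ∀ T,
      weightedCount w univ.powerset T * exp (-(s * weightedCount w univ.powerset T)) =
        ∑ A ∈ univ.powerset, w A *
          if A ⊆ T then exp (-(s * weightedCount w univ.powerset T)) else 0 := fun T ↦ by
    simp only [weightedCount, sum_mul, ite_mul, zero_mul, mul_ite, mul_zero]
  simp only [hsplit, expectation_sum, expectation_const_mul,
    expectation_weightedCount p fun B _ ↦ subset_univ B, delta, mul_sum, sub_mul, sum_mul,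
    ← sum_sub_distrib]
  refine sum_le_sum fun A _ ↦ ?_
  calc _ = w A * (negMgf p w s * (p ^ #A - s * overlapSum p w A)) := by ring
    _ ≤ _ := mul_le_mul_of_nonneg_left
      (negMgf_mul_le_expectation_ite_subset hp0 hp1 hw hs A) (hw A)

lemma hasDerivAt_negMgf (s : ℝ) :
    HasDerivAt (negMgf p w) (-expectation p univ fun T ↦
      weightedCount w univ.powerset T * exp (-(s * weightedCount w univ.powerset T))) s := by
  refine (HasDerivAt.fun_sum (u := univ.powerset) (x := s) fun T _ ↦
    ((hasDerivAt_mul_const (weightedCount w univ.powerset T)).neg.exp).const_mul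
      (weight p univ T)).congr_deriv ?_
  simp only [Pi.neg_apply, expectation, ← sum_neg_distrib]
  exact sum_congr rfl fun T _ ↦ by ring

lemma negMgf_le_exp (hp0 : 0 ≤ p) (hp1 : p ≤ 1) (hw : ∀ A, 0 ≤ w A) {l : ℝ} (hl : 0 ≤ l) :
    negMgf p w l ≤
      exp (l ^ 2 * delta p w / 2 - l * expectation p univ (weightedCount w univ.powerset)) := by
  set m := expectation p univ (weightedCount w univ.powerset)
  set q : ℝ → ℝ := fun s ↦ s * m - s ^ 2 * delta p w / 2
  have hq : ∀ s, HasDerivAt q (m - s * delta p w) s := fun s ↦ by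
    refine (((hasDerivAt_id' s).mul_const m).sub
      (((hasDerivAt_pow 2 s).mul_const (delta p w)).div_const 2)).congr_deriv ?_
    norm_num
    ring
  set F : ℝ → ℝ := fun s ↦ negMgf p w s * exp (q s)
  have hF : ∀ s, HasDerivAt F (exp (q s) * ((m - s * delta p w) * negMgf p w s -
      expectation p univ fun T ↦
        weightedCount w univ.powerset T * exp (-(s * weightedCount w univ.powerset T)))) s :=
    fun s ↦ ((hasDerivAt_negMgf s).mul (hq s).exp).congr_deriv (by ring)
  have hanti : AntitoneOn F (Set.Ici 0) :=
    antitoneOn_of_hasDerivWithinAt_nonpos (convex_Ici 0)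
      (fun s _ ↦ (hF s).continuousAt.continuousWithinAt) (fun s _ ↦ (hF s).hasDerivWithinAt)
      fun s hs ↦ mul_nonpos_of_nonneg_of_nonpos (exp_pos _).le <| sub_nonpos.2 <|
        mean_sub_mul_delta_mul_negMgf_le hp0 hp1 hw (interior_Ici (a := (0 : ℝ)) ▸ hs).le
  have hF0 : F 0 = 1 := by simp [F, q, negMgf, expectation_const]
  have hFl : F l ≤ 1 := hF0 ▸ hanti Set.self_mem_Ici hl hl
  calc negMgf p w l = F l * exp (-q l) := by simp [F, mul_assoc, ← exp_add]
    _ ≤ exp (-q l) := mul_le_of_le_one_left (exp_pos _).le hFl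
    _ = _ := by congr 1; ring

end

end Janson

open RandomSubset Janson Real in
theorem stmt_11_general {V : Type*} [Fintype V] [DecidableEq V]
    (p : ℝ) (hp0 : 0 ≤ p) (hp1 : p ≤ 1)
    (w : Finset V → ℝ) (hw : ∀ A, 0 ≤ w A) (t : ℝ) :
    let μ : Finset V → ℝ := fun T => p ^ T.card * (1 - p) ^ (Fintype.card V - T.card)
    let X : Finset V → ℝ := fun T => ∑ A ∈ (univ : Finset V).powerset,
      (if A ⊆ T then w A else 0)
    let EX : ℝ := ∑ T ∈ (univ : Finset V).powerset, μ T * X T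
    let Δ : ℝ := ∑ A ∈ (univ : Finset V).powerset, ∑ B ∈ (univ : Finset V).powerset,
      (if (A ∩ B).Nonempty then w A * w B * p ^ (A ∪ B).card else 0)
    0 ≤ t → t ≤ EX →
      ∑ T ∈ ((univ : Finset V).powerset.filter (fun T => X T ≤ EX - t)), μ T ≤
        Real.exp (-t ^ 2 / (2 * Δ)) := by
  intro μ X EX Δ ht _
  have hμ : μ = weight p univ := funext fun T ↦ by simp [μ, weight, card_univ]
  have hEX : EX = expectation p univ X := by simp only [EX, hμ, expectation]
  have hΔ : Δ = delta p w := by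
    simp only [Δ, delta, overlapSum, mul_sum, sum_filter, mul_ite, mul_zero, mul_assoc]
  have hl : 0 ≤ t / Δ := div_nonneg ht (hΔ ▸ delta_nonneg hp0 hw)
  calc _ ≤ exp (t / Δ * (EX - t)) * negMgf p w (t / Δ) := by
        rw [hμ]; exact sum_weight_le_le_exp_mul_expectation hp0 hp1 X _ hl
    _ ≤ exp (t / Δ * (EX - t)) * exp ((t / Δ) ^ 2 * Δ / 2 - t / Δ * EX) := by
        rw [hEX, hΔ]; gcongr; exact negMgf_le_exp hp0 hp1 hw (hΔ ▸ hl)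
    _ = exp (-t ^ 2 / (2 * Δ)) := by
        rw [← exp_add]
        congr 1
        rcases eq_or_ne Δ 0 with h | h
        · simp [h] -- `t / 0 = 0`: both exponents vanish
        · field_simp; ring

/-- Weighted Janson inequality: let `V_p` be the binomial random subset of a finite
nonempty set `V` (each element included independently with probability `p`), let
`w : 𝒫(V) → ℝ≥0` be a weight function, `X = ∑_A w(A) 𝟙[A ⊆ V_p]`, and
`Δ = ∑_{A∩B≠∅} w(A)w(B) ℙ(A∪B ⊆ V_p)`. Then for `t ∈ [0, 𝔼X]`,
`ℙ(X ≤ 𝔼X - t) ≤ exp(-t²/(2Δ))`. Probabilities and expectations are spelled out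
explicitly over the `2^|V|` outcomes `T ⊆ V`, with
`ℙ(V_p = T) = p^|T| (1-p)^{|V|-|T|}` and `ℙ(A ⊆ V_p) = p^|A|`. -/
theorem stmt_11 {V : Type*} [Fintype V] [DecidableEq V] [Nonempty V]
    (p : ℝ) (hp0 : 0 ≤ p) (hp1 : p ≤ 1)
    (w : Finset V → ℝ) (hw : ∀ A, 0 ≤ w A) (t : ℝ) :
    let μ : Finset V → ℝ := fun T => p ^ T.card * (1 - p) ^ (Fintype.card V - T.card)
    let X : Finset V → ℝ := fun T => ∑ A ∈ (univ : Finset V).powerset,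
      (if A ⊆ T then w A else 0)
    let EX : ℝ := ∑ T ∈ (univ : Finset V).powerset, μ T * X T
    let Δ : ℝ := ∑ A ∈ (univ : Finset V).powerset, ∑ B ∈ (univ : Finset V).powerset,
      (if (A ∩ B).Nonempty then w A * w B * p ^ (A ∪ B).card else 0)
    0 ≤ t → t ≤ EX →
      ∑ T ∈ ((univ : Finset V).powerset.filter (fun T => X T ≤ EX - t)), μ T ≤
        Real.exp (-t ^ 2 / (2 * Δ)) :=
  stmt_11_general p hp0 hp1 w hw t
end
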